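/- Let p > 1 and let u be a smooth stable solution of Δ²u = |u|^{p−1}u on ℝⁿ, and set v = Δu. Then there exists a constant C > 0 depending only on n and p such that for every η ∈ C_c^∞(ℝⁿ): ∫_{ℝⁿ} (v² + |u|^{p+1}) η² dx ≤ C ∫_{ℝⁿ} u² ( |∇(Δη)·∇η| + (Δη)² + |Δ(|∇η|²)| ) dx + C ∫_{ℝⁿ} |u v| |∇η|² dx. -/

import Mathlib

open MeasureTheory Metric Set
open scoped RealInnerProductSpace ENNReal NNReal Topology

noncomputable section

/-- The Laplacian of `u : ℝⁿ → ℝ`, as the sum of the pure second derivatives. -/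
def lap (n : ℕ) (u : EuclideanSpace ℝ (Fin n) → ℝ) (x : EuclideanSpace ℝ (Fin n)) : ℝ :=
  ∑ i : Fin n, iteratedFDeriv ℝ 2 u x ![EuclideanSpace.single i 1, EuclideanSpace.single i 1]

/-- The bilaplacian `Δ²u`. -/
def biLap (n : ℕ) (u : EuclideanSpace ℝ (Fin n) → ℝ) : EuclideanSpace ℝ (Fin n) → ℝ :=
  lap n (lap n u)

/-- The radial derivative `∂u/∂r` of `u` at `y`, relative to the center `x`. -/
def radD (n : ℕ) (x : EuclideanSpace ℝ (Fin n)) (u : EuclideanSpace ℝ (Fin n) → ℝ)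
    (y : EuclideanSpace ℝ (Fin n)) : ℝ :=
  fderiv ℝ u y (‖y - x‖⁻¹ • (y - x))

/-- Surface integral over the sphere of radius `r` centered at `x`, with respect to the
`(n-1)`-dimensional Hausdorff measure. -/
def sInt (n : ℕ) (f : EuclideanSpace ℝ (Fin n) → ℝ) (x : EuclideanSpace ℝ (Fin n)) (r : ℝ) : ℝ :=
  ∫ y in Metric.sphere x r, f y ∂(μH[(n : ℝ) - 1])

/-- The monotone energy `E(r; x, u)` of the monotonicity formula. -/
def energy (n : ℕ) (p : ℝ) (u : EuclideanSpace ℝ (Fin n) → ℝ) (x : EuclideanSpace ℝ (Fin n))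
    (r : ℝ) : ℝ :=
  r ^ (4*(p+1)/(p-1) - n) *
      ∫ y in Metric.ball x r, ((lap n u y)^2/2 - |u y| ^ (p+1) / (p+1))
  + (2/(p-1)) * ((n:ℝ) - 2 - 4/(p-1)) * (r ^ (8/(p-1) + 1 - n) * sInt n (fun y => (u y)^2) x r)
  + (2/(p-1)) * ((n:ℝ) - 2 - 4/(p-1)) *
      deriv (fun s : ℝ => s ^ (8/(p-1) + 2 - n) * sInt n (fun y => (u y)^2) x s) r
  + (r^3/2) *
      deriv (fun s : ℝ => s ^ (8/(p-1) + 1 - n) *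
        sInt n (fun y => ((4/(p-1)) * s⁻¹ * u y + radD n x u y)^2) x s) r
  + (1/2) *
      deriv (fun s : ℝ => s ^ (8/(p-1) + 4 - n) *
        sInt n (fun y => ‖gradient u y‖^2 - (radD n x u y)^2) x s) r
  + (1/2) * (r ^ (8/(p-1) + 3 - n) * sInt n (fun y => ‖gradient u y‖^2 - (radD n x u y)^2) x r)

/-- `p < p_c(n)`, where `p_c(n)` is the fourth-order Joseph–Lundgren exponent
(`p_c(n) = +∞` for `n ≤ 12`, so the condition is vacuous there). -/
def ltPc (n : ℕ) (p : ℝ) : Prop :=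
  12 < n → p < ((n:ℝ) + 2 - Real.sqrt ((n:ℝ)^2 + 4 - n * Real.sqrt ((n:ℝ)^2 - 8*n + 32))) /
    ((n:ℝ) - 6 - Real.sqrt ((n:ℝ)^2 + 4 - n * Real.sqrt ((n:ℝ)^2 - 8*n + 32)))

/-- `u` is a stable solution on `Ω`: the second variation of the energy is nonnegative on
test functions supported in `Ω`. -/
def StableOn (n : ℕ) (p : ℝ) (u : EuclideanSpace ℝ (Fin n) → ℝ)
    (Ω : Set (EuclideanSpace ℝ (Fin n))) : Prop :=
  ∀ φ : EuclideanSpace ℝ (Fin n) → ℝ, ContDiff ℝ (⊤ : ℕ∞) φ → HasCompactSupport φ → tsupport φ ⊆ Ω →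
    p * ∫ y, |u y| ^ (p-1) * (φ y)^2 ≤ ∫ y, (lap n φ y)^2

/-- `u` has finite Morse index: the dimensions of finite-dimensional subspaces of test functions
on which the quadratic form `Λ_u` is negative definite are bounded. -/
def FiniteMorseIndex (n : ℕ) (p : ℝ) (u : EuclideanSpace ℝ (Fin n) → ℝ) : Prop :=
  ∃ k : ℕ, ∀ V : Submodule ℝ (EuclideanSpace ℝ (Fin n) → ℝ), FiniteDimensional ℝ V →
    (∀ φ ∈ V, ContDiff ℝ (⊤ : ℕ∞) φ ∧ HasCompactSupport φ) →
    (∀ φ ∈ V, φ ≠ 0 → (∫ y, (lap n φ y)^2) - p * ∫ y, |u y| ^ (p-1) * (φ y)^2 < 0) →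
    Module.finrank ℝ V ≤ k


section SELib
open Finset

variable {n : ℕ}
local notation "E" => EuclideanSpace ℝ (Fin n)

/-- Partial derivative in the `i`-th coordinate direction. -/
def pd (n : ℕ) (i : Fin n) (f : EuclideanSpace ℝ (Fin n) → ℝ) (x : EuclideanSpace ℝ (Fin n)) : ℝ :=
  fderiv ℝ f x (EuclideanSpace.single i (1:ℝ))

/-- The auxiliary function `G = ∇u·∇η`. -/
def GG (n : ℕ) (u η : EuclideanSpace ℝ (Fin n) → ℝ) (x : EuclideanSpace ℝ (Fin n)) : ℝ :=
  ∑ i, pd n i u x * pd n i η x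
/-- The auxiliary function `ψ = |∇η|²`. -/
def psiF (n : ℕ) (η : EuclideanSpace ℝ (Fin n) → ℝ) (x : EuclideanSpace ℝ (Fin n)) : ℝ :=
  ∑ i, (pd n i η x)^2
/-- The auxiliary function `K = ∇(Δη)·∇η`. -/
def KK (n : ℕ) (η : EuclideanSpace ℝ (Fin n) → ℝ) (x : EuclideanSpace ℝ (Fin n)) : ℝ :=
  ∑ i, pd n i (lap n η) x * pd n i η x
/-- The auxiliary function `b = 2∇u·∇η + uΔη`. -/
def bb (n : ℕ) (u η : EuclideanSpace ℝ (Fin n) → ℝ) (x : EuclideanSpace ℝ (Fin n)) : ℝ :=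
  2 * GG n u η x + u x * lap n η x

lemma pd_contDiff {f : E → ℝ} (hf : ContDiff ℝ (⊤ : ℕ∞) f) (i : Fin n) : ContDiff ℝ (⊤ : ℕ∞) (pd n i f) := by
  have h1 : ContDiff ℝ (⊤ : ℕ∞) (fderiv ℝ f) := hf.fderiv_right (by simp)
  exact (ContinuousLinearMap.apply ℝ ℝ (EuclideanSpace.single i (1:ℝ))).contDiff.comp h1

lemma pd_eq_fderiv2 {f : E → ℝ} (hf : ContDiff ℝ (⊤ : ℕ∞) f) (i : Fin n) (x : E) :
    pd n i (pd n i f) x =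
      fderiv ℝ (fderiv ℝ f) x (EuclideanSpace.single i 1) (EuclideanSpace.single i 1) := by
  have hd : DifferentiableAt ℝ (fderiv ℝ f) x :=
    ((hf.fderiv_right (m := (⊤ : ℕ∞)) (by simp)).differentiable (by simp)) x
  have h2 : pd n i f = fun y => (fderiv ℝ f y) (EuclideanSpace.single i 1) := rfl
  rw [pd, h2, fderiv_clm_apply hd (differentiableAt_const _)]
  simp

lemma lap_eq_sum {f : E → ℝ} (hf : ContDiff ℝ (⊤ : ℕ∞) f) (x : E) :
    lap n f x = ∑ i, pd n i (pd n i f) x := by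
  unfold lap
  refine Finset.sum_congr rfl fun i _ => ?_
  rw [iteratedFDeriv_two_apply, pd_eq_fderiv2 hf]
  simp

lemma contDiff_lap {f : E → ℝ} (hf : ContDiff ℝ (⊤ : ℕ∞) f) : ContDiff ℝ (⊤ : ℕ∞) (lap n f) := by
  have h : lap n f = fun x => ∑ i, pd n i (pd n i f) x := funext (lap_eq_sum hf)
  rw [h]
  exact ContDiff.sum fun i _ => pd_contDiff (pd_contDiff hf i) i

lemma hcs_pd {f : E → ℝ} (hf : ContDiff ℝ (⊤ : ℕ∞) f) (h : HasCompactSupport f) (i : Fin n) :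
    HasCompactSupport (pd n i f) := by
  have h2 := (h.fderiv ℝ)
  exact h2.comp_left (g := fun L : E →L[ℝ] ℝ => L (EuclideanSpace.single i 1)) rfl

lemma pd_mul {f g : E → ℝ} (hf : ContDiff ℝ (⊤ : ℕ∞) f) (hg : ContDiff ℝ (⊤ : ℕ∞) g) (i : Fin n) (x : E) :
    pd n i (fun y => f y * g y) x = f x * pd n i g x + g x * pd n i f x := by
  unfold pd
  rw [fderiv_fun_mul (hf.differentiable (by simp) x) (hg.differentiable (by simp) x)]
  simp

lemma pd_add {f g : E → ℝ} (hf : ContDiff ℝ (⊤ : ℕ∞) f) (hg : ContDiff ℝ (⊤ : ℕ∞) g) (i : Fin n) (x : E) :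
    pd n i (fun y => f y + g y) x = pd n i f x + pd n i g x := by
  unfold pd
  rw [fderiv_fun_add (hf.differentiable (by simp) x) (hg.differentiable (by simp) x)]
  simp

lemma lap_mul {f g : E → ℝ} (hf : ContDiff ℝ (⊤ : ℕ∞) f) (hg : ContDiff ℝ (⊤ : ℕ∞) g) (x : E) :
    lap n (fun y => f y * g y) x
      = f x * lap n g x + 2 * ∑ i, pd n i f x * pd n i g x + g x * lap n f x := by
  rw [lap_eq_sum (hf.mul hg), lap_eq_sum hf, lap_eq_sum hg]
  have h1 : ∀ i : Fin n, pd n i (pd n i (fun y => f y * g y)) x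
      = f x * pd n i (pd n i g) x + 2 * (pd n i f x * pd n i g x)
        + g x * pd n i (pd n i f) x := by
    intro i
    have hfun : pd n i (fun y => f y * g y)
        = fun y => (fun z => f z * pd n i g z) y + (fun z => g z * pd n i f z) y :=
      funext fun y => pd_mul hf hg i y
    rw [hfun, pd_add (hf.mul (pd_contDiff hg i)) (hg.mul (pd_contDiff hf i)) i x,
      pd_mul hf (pd_contDiff hg i) i x, pd_mul hg (pd_contDiff hf i) i x]
    ring
  rw [Finset.sum_congr rfl fun i _ => h1 i]
  rw [Finset.sum_add_distrib, Finset.sum_add_distrib, ← Finset.mul_sum, ← Finset.mul_sum,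
    ← Finset.mul_sum]

lemma grad_inner {f g : E → ℝ} (x : E) :
    (inner ℝ (gradient f x) (gradient g x) : ℝ) = ∑ i, pd n i f x * pd n i g x := by
  have key : ∀ (h : E → ℝ) (i : Fin n), (gradient h x) i = pd n i h x := by
    intro h i
    have h3 : (inner ℝ (gradient h x) (EuclideanSpace.single i (1:ℝ)) : ℝ)
        = fderiv ℝ h x (EuclideanSpace.single i (1:ℝ)) := by
      simp [gradient, InnerProductSpace.toDual_symm_apply]
    rw [pd, ← h3]
    rw [EuclideanSpace.inner_single_right]; simp
  rw [PiLp.inner_apply]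
  refine Finset.sum_congr rfl fun i _ => ?_
  rw [key f i, key g i]
  simp [pd]; ring

lemma grad_norm_sq {f : E → ℝ} (x : E) :
    ‖gradient f x‖^2 = ∑ i, (pd n i f x)^2 := by
  rw [← real_inner_self_eq_norm_sq, grad_inner]
  refine Finset.sum_congr rfl fun i _ => (sq (pd n i f x)).symm ▸ by ring

lemma intc {f g : E → ℝ} (h : ∀ x, f x = g x) : ∫ x, f x = ∫ x, g x :=
  integral_congr_ae (Filter.Eventually.of_forall fun x => h x)

lemma hcs_dom {f : E → ℝ} (g : E → ℝ) (h : HasCompactSupport g)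
    (hfg : ∀ x, g x = 0 → f x = 0) : HasCompactSupport f := by
  have hsub : Function.support f ⊆ Function.support g := fun x hx hgx => hx (hfg x hgx)
  exact HasCompactSupport.of_support_subset_isCompact h (hsub.trans subset_closure)

lemma hcs_sum {ι : Type*} (s : Finset ι) (f : ι → E → ℝ)
    (h : ∀ i, HasCompactSupport (f i)) : HasCompactSupport (fun x => ∑ i ∈ s, f i x) := by
  classical
  induction s using Finset.induction with
  | empty =>
      simp only [Finset.sum_empty]
      exact (by
        rw [HasCompactSupport, tsupport]
        simp : HasCompactSupport (fun _ : E => (0:ℝ)))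
  | insert _ _ hns ih =>
      simp only [Finset.sum_insert hns]
      exact (h _).add ih

lemma int_cc {f g : E → ℝ} (hf : Continuous f) (hg : Continuous g)
    (hc : HasCompactSupport g) : Integrable (fun x => f x * g x) :=
  (hf.mul hg).integrable_of_hasCompactSupport (hc.mul_left)

lemma ibp1 {f g : E → ℝ} (hf : ContDiff ℝ (⊤ : ℕ∞) f) (hg : ContDiff ℝ (⊤ : ℕ∞) g)
    (hc : HasCompactSupport g) (i : Fin n) :
    ∫ x, f x * pd n i g x = - ∫ x, pd n i f x * g x := by
  exact integral_mul_fderiv_eq_neg_fderiv_mul_of_integrable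
    (int_cc (pd_contDiff hf i).continuous hg.continuous hc)
    (int_cc hf.continuous (pd_contDiff hg i).continuous (hcs_pd hg hc i))
    (int_cc hf.continuous hg.continuous hc)
    (fun x _ => hf.differentiable (by simp) x) (fun x _ => hg.differentiable (by simp) x)

lemma green {f g : E → ℝ} (hf : ContDiff ℝ (⊤ : ℕ∞) f) (hg : ContDiff ℝ (⊤ : ℕ∞) g)
    (hc : HasCompactSupport g) :
    ∫ x, lap n f x * g x = ∫ x, f x * lap n g x := by
  have key : ∀ i : Fin n, ∫ x, pd n i (pd n i f) x * g x = ∫ x, f x * pd n i (pd n i g) x := by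
    intro i
    have h1 : ∫ x, pd n i f x * pd n i g x = - ∫ x, pd n i (pd n i f) x * g x :=
      ibp1 (pd_contDiff hf i) hg hc i
    have h2 : ∫ x, f x * pd n i (pd n i g) x = - ∫ x, pd n i f x * pd n i g x :=
      ibp1 hf (pd_contDiff hg i) (hcs_pd hg hc i) i
    rw [h2, h1]; ring
  calc ∫ x, lap n f x * g x = ∫ x, ∑ i, pd n i (pd n i f) x * g x := by
        refine integral_congr_ae (Filter.Eventually.of_forall fun x => ?_)
        simp only [lap_eq_sum hf, Finset.sum_mul]
    _ = ∑ i, ∫ x, pd n i (pd n i f) x * g x := by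
        refine integral_finset_sum _ fun i _ => ?_
        exact int_cc (pd_contDiff (pd_contDiff hf i) i).continuous hg.continuous hc
    _ = ∑ i, ∫ x, f x * pd n i (pd n i g) x := by exact Finset.sum_congr rfl fun i _ => key i
    _ = ∫ x, ∑ i, f x * pd n i (pd n i g) x := by
        refine (integral_finset_sum _ fun i _ => ?_).symm
        exact int_cc hf.continuous (pd_contDiff (pd_contDiff hg i) i).continuous
          (hcs_pd (pd_contDiff hg i) (hcs_pd hg hc i) i)
    _ = ∫ x, f x * lap n g x := by
        refine integral_congr_ae (Filter.Eventually.of_forall fun x => ?_)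
        simp only [lap_eq_sum hg, Finset.mul_sum]

lemma ibp_half {u w : E → ℝ} (hu : ContDiff ℝ (⊤ : ℕ∞) u) (hw : ContDiff ℝ (⊤ : ℕ∞) w)
    (hc : HasCompactSupport w) (i : Fin n) :
    ∫ x, u x * pd n i u x * w x = -(1/2) * ∫ x, (u x)^2 * pd n i w x := by
  have h1 : ∫ x, (fun y => (u y)^2) x * pd n i w x = - ∫ x, pd n i (fun y => (u y)^2) x * w x :=
    ibp1 (by exact (hu.pow 2)) hw hc i
  have h2 : ∀ x : E, pd n i (fun y => (u y)^2) x = 2 * (u x * pd n i u x) := by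
    intro x
    have h : (fun y => (u y)^2) = fun y => u y * u y := by funext y; ring
    rw [h, pd_mul hu hu i x]; ring
  have h3 : ∫ x, pd n i (fun y => (u y)^2) x * w x = 2 * ∫ x, u x * pd n i u x * w x := by
    rw [← integral_const_mul]
    refine integral_congr_ae (Filter.Eventually.of_forall fun x => ?_)
    simp only [h2 x]; ring
  rw [h3] at h1
  simp only at h1 ⊢
  linarith

lemma int_split3 {f1 f2 f3 : E → ℝ} (h1 : Integrable f1) (h2 : Integrable f2)
    (h3 : Integrable f3) (c1 c2 c3 : ℝ) :
    ∫ x, (c1 * f1 x + c2 * f2 x + c3 * f3 x)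
      = c1 * (∫ x, f1 x) + c2 * (∫ x, f2 x) + c3 * (∫ x, f3 x) := by
  have g1 : Integrable (fun x => c1 * f1 x) := h1.const_mul c1
  have g2 : Integrable (fun x => c2 * f2 x) := h2.const_mul c2
  have g3 : Integrable (fun x => c3 * f3 x) := h3.const_mul c3
  have g12 : Integrable (fun x => c1 * f1 x + c2 * f2 x) := g1.add g2
  rw [integral_add g12 g3, integral_add g1 g2,
    integral_const_mul, integral_const_mul, integral_const_mul]

lemma J6 {u ψ : E → ℝ} (hu : ContDiff ℝ (⊤ : ℕ∞) u) (hψ : ContDiff ℝ (⊤ : ℕ∞) ψ)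
    (hψc : HasCompactSupport ψ) :
    ∫ x, (∑ i, (pd n i u x)^2) * ψ x
      = -(∫ x, u x * lap n u x * ψ x) + (1/2) * ∫ x, (u x)^2 * lap n ψ x := by
  have step : ∀ i : Fin n, ∫ x, (pd n i u x)^2 * ψ x
      = (1/2) * (∫ x, (u x)^2 * pd n i (pd n i ψ) x)
        - ∫ x, u x * ψ x * pd n i (pd n i u) x := by
    intro i
    have hw : ContDiff ℝ (⊤ : ℕ∞) (fun x => pd n i u x * ψ x) := (pd_contDiff hu i).mul hψ
    have hwc : HasCompactSupport (fun x => pd n i u x * ψ x) :=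
      hcs_dom _ hψc (fun x hx => by simp [hx])
    have e1 := ibp1 hu hw hwc i
    have e2 : ∀ x : E, pd n i (fun y => pd n i u y * ψ y) x
        = pd n i u x * pd n i ψ x + ψ x * pd n i (pd n i u) x :=
      pd_mul (pd_contDiff hu i) hψ i
    have e3 := ibp_half hu (pd_contDiff hψ i) (hcs_pd hψ hψc i) i
    have e4 : ∫ x, (pd n i u x)^2 * ψ x = - ∫ x, u x * pd n i (fun y => pd n i u y * ψ y) x := by
      rw [e1]
      rw [neg_neg]
      exact intc fun x => by ring
    rw [e4]
    have e5 : ∫ x, u x * pd n i (fun y => pd n i u y * ψ y) x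
        = ∫ x, (u x * pd n i u x * pd n i ψ x + u x * ψ x * pd n i (pd n i u) x) := by
      refine intc fun x => ?_
      rw [e2 x]; ring
    rw [e5]
    have i1 : Integrable (fun x => u x * pd n i u x * pd n i ψ x) :=
      ((hu.continuous.mul (pd_contDiff hu i).continuous).mul
        (pd_contDiff hψ i).continuous).integrable_of_hasCompactSupport
        (hcs_dom _ (hcs_pd hψ hψc i) (fun x hx => by simp [hx]))
    have i2 : Integrable (fun x => u x * ψ x * pd n i (pd n i u) x) :=
      ((hu.continuous.mul hψ.continuous).mul
        (pd_contDiff (pd_contDiff hu i) i).continuous).integrable_of_hasCompactSupport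
        (hcs_dom _ hψc (fun x hx => by simp [hx]))
    rw [integral_add i1 i2, e3]
    ring
  have hsplit : ∫ x, (∑ i, (pd n i u x)^2) * ψ x = ∑ i, ∫ x, (pd n i u x)^2 * ψ x := by
    rw [intc (g := fun x => ∑ i, (pd n i u x)^2 * ψ x) (fun x => by rw [Finset.sum_mul])]
    refine integral_finset_sum _ fun i _ => ?_
    exact (((pd_contDiff hu i).continuous.pow 2).mul
      hψ.continuous).integrable_of_hasCompactSupport
      (hcs_dom _ hψc (fun x hx => by simp [hx]))
  rw [hsplit, Finset.sum_congr rfl fun i _ => step i, Finset.sum_sub_distrib]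
  have t1 : ∑ i : Fin n, (1/2 : ℝ) * ∫ x, (u x)^2 * pd n i (pd n i ψ) x
      = (1/2) * ∫ x, (u x)^2 * lap n ψ x := by
    rw [← Finset.mul_sum]
    congr 1
    rw [← integral_finset_sum _ fun i _ => ?_]
    · refine intc fun x => ?_
      rw [lap_eq_sum hψ, Finset.mul_sum]
    · exact ((hu.continuous.pow 2).mul
        (pd_contDiff (pd_contDiff hψ i) i).continuous).integrable_of_hasCompactSupport
        (hcs_dom _ (hcs_pd (pd_contDiff hψ i) (hcs_pd hψ hψc i) i) (fun x hx => by simp [hx]))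
  have t2 : ∑ i : Fin n, ∫ x, u x * ψ x * pd n i (pd n i u) x
      = ∫ x, u x * lap n u x * ψ x := by
    rw [← integral_finset_sum _ fun i _ => ?_]
    · refine intc fun x => ?_
      rw [lap_eq_sum hu, Finset.mul_sum, Finset.sum_mul]
      exact Finset.sum_congr rfl fun i _ => by ring
    · exact ((hu.continuous.mul hψ.continuous).mul
        (pd_contDiff (pd_contDiff hu i) i).continuous).integrable_of_hasCompactSupport
        (hcs_dom _ hψc (fun x hx => by simp [hx]))
  rw [t1, t2]
  ring

lemma hcs_lap {η : E → ℝ} (hη : ContDiff ℝ (⊤ : ℕ∞) η) (hηc : HasCompactSupport η) :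
    HasCompactSupport (lap n η) := by
  have h : lap n η = fun x => ∑ i, pd n i (pd n i η) x := funext (lap_eq_sum hη)
  rw [h]
  exact hcs_sum _ (fun i x => pd n i (pd n i η) x)
    fun i => hcs_pd (pd_contDiff hη i) (hcs_pd hη hηc i) i

lemma hcs_psiF {η : E → ℝ} (hη : ContDiff ℝ (⊤ : ℕ∞) η) (hηc : HasCompactSupport η) :
    HasCompactSupport (psiF n η) := by
  show HasCompactSupport (fun x => ∑ i, (pd n i η x)^2)
  exact hcs_sum _ (fun i x => (pd n i η x)^2)
    fun i => hcs_dom (pd n i η) (hcs_pd hη hηc i) (fun x hx => by simp [hx])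

lemma hcs_GG {u η : E → ℝ} (hη : ContDiff ℝ (⊤ : ℕ∞) η) (hηc : HasCompactSupport η) :
    HasCompactSupport (GG n u η) := by
  show HasCompactSupport (fun x => ∑ i, pd n i u x * pd n i η x)
  exact hcs_sum _ (fun i x => pd n i u x * pd n i η x)
    fun i => hcs_dom (pd n i η) (hcs_pd hη hηc i) (fun x hx => by simp [hx])

lemma hcs_KK {η : E → ℝ} (hη : ContDiff ℝ (⊤ : ℕ∞) η) (hηc : HasCompactSupport η) :
    HasCompactSupport (KK n η) := by
  show HasCompactSupport (fun x => ∑ i, pd n i (lap n η) x * pd n i η x)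
  exact hcs_sum _ (fun i x => pd n i (lap n η) x * pd n i η x)
    fun i => hcs_dom (pd n i η) (hcs_pd hη hηc i) (fun x hx => by simp [hx])

lemma hcs_bb {u η : E → ℝ} (hu : ContDiff ℝ (⊤ : ℕ∞) u) (hη : ContDiff ℝ (⊤ : ℕ∞) η)
    (hηc : HasCompactSupport η) : HasCompactSupport (bb n u η) := by
  have h1 : HasCompactSupport (fun x => 2 * GG n u η x) :=
    hcs_dom (GG n u η) (hcs_GG hη hηc) (fun x hx => by simp [hx])
  have h2 : HasCompactSupport (fun x => u x * lap n η x) :=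
    hcs_dom (lap n η) (hcs_lap hη hηc) (fun x hx => by simp [hx])
  exact h1.add h2

lemma cd_psiF {η : E → ℝ} (hη : ContDiff ℝ (⊤ : ℕ∞) η) : ContDiff ℝ (⊤ : ℕ∞) (psiF n η) :=
  ContDiff.sum fun i _ => (pd_contDiff hη i).pow 2
lemma cd_GG {u η : E → ℝ} (hu : ContDiff ℝ (⊤ : ℕ∞) u) (hη : ContDiff ℝ (⊤ : ℕ∞) η) :
    ContDiff ℝ (⊤ : ℕ∞) (GG n u η) :=
  ContDiff.sum fun i _ => (pd_contDiff hu i).mul (pd_contDiff hη i)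
lemma cd_KK {η : E → ℝ} (hη : ContDiff ℝ (⊤ : ℕ∞) η) : ContDiff ℝ (⊤ : ℕ∞) (KK n η) :=
  ContDiff.sum fun i _ => (pd_contDiff (contDiff_lap hη) i).mul (pd_contDiff hη i)
lemma cd_bb {u η : E → ℝ} (hu : ContDiff ℝ (⊤ : ℕ∞) u) (hη : ContDiff ℝ (⊤ : ℕ∞) η) :
    ContDiff ℝ (⊤ : ℕ∞) (bb n u η) :=
  (contDiff_const.mul (cd_GG hu hη)).add (hu.mul (contDiff_lap hη))

lemma lap_sq {η : E → ℝ} (hη : ContDiff ℝ (⊤ : ℕ∞) η) (x : E) :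
    lap n (fun y => (η y)^2) x = 2 * η x * lap n η x + 2 * psiF n η x := by
  have h : (fun y => (η y)^2) = fun y => η y * η y := funext fun y => sq (η y)
  rw [h, lap_mul hη hη x, psiF]
  have h2 : ∑ i, pd n i η x * pd n i η x = ∑ i, (pd n i η x)^2 :=
    Finset.sum_congr rfl fun i _ => (sq (pd n i η x)).symm
  rw [h2]; ring

lemma exp1 {u η : E → ℝ} (hu : ContDiff ℝ (⊤ : ℕ∞) u) (hη : ContDiff ℝ (⊤ : ℕ∞) η) (x : E) :
    lap n (fun y => u y * η y) x = η x * lap n u x + bb n u η x := by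
  rw [lap_mul hu hη x, bb, GG]; ring

lemma exp2 {u η : E → ℝ} (hu : ContDiff ℝ (⊤ : ℕ∞) u) (hη : ContDiff ℝ (⊤ : ℕ∞) η) (x : E) :
    lap n (fun y => u y * (η y)^2) x
      = (η x)^2 * lap n u x + 2 * η x * bb n u η x + 2 * u x * psiF n η x := by
  rw [lap_mul hu (hη.pow 2) x, lap_sq hη x, bb, GG]
  have h2 : ∀ i : Fin n, pd n i (fun y => (η y)^2) x = 2 * (η x * pd n i η x) := by
    intro i
    have h : (fun y => (η y)^2) = fun y => η y * η y := funext fun y => sq (η y)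
    rw [h, pd_mul hη hη i x]; ring
  rw [Finset.sum_congr rfl fun i _ => by rw [h2 i]]
  have h3 : ∑ i : Fin n, pd n i u x * (2 * (η x * pd n i η x))
      = 2 * η x * ∑ i, pd n i u x * pd n i η x := by
    rw [Finset.mul_sum]
    exact Finset.sum_congr rfl fun i _ => by ring
  rw [h3]
  ring

lemma J7 {u η : E → ℝ} (hu : ContDiff ℝ (⊤ : ℕ∞) u) (hη : ContDiff ℝ (⊤ : ℕ∞) η)
    (hηc : HasCompactSupport η) :
    ∫ x, u x * GG n u η x * lap n η x
      = -(1/2) * (∫ x, (u x)^2 * (lap n η x)^2) - (1/2) * ∫ x, (u x)^2 * KK n η x := by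
  have hwc : HasCompactSupport (fun x => lap n η x) := hcs_lap hη hηc
  have step : ∀ i : Fin n, ∫ x, u x * pd n i u x * (pd n i η x * lap n η x)
      = -(1/2) * ∫ x, (u x)^2 * pd n i (fun y => pd n i η y * lap n η y) x :=
    fun i => ibp_half hu ((pd_contDiff hη i).mul (contDiff_lap hη))
      (hcs_dom (lap n η) hwc (fun x hx => by simp [hx])) i
  have hsplit : ∫ x, u x * GG n u η x * lap n η x
      = ∑ i, ∫ x, u x * pd n i u x * (pd n i η x * lap n η x) := by
    have hg : ∀ x : E, u x * GG n u η x * lap n η x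
        = ∑ i, u x * pd n i u x * (pd n i η x * lap n η x) := by
      intro x
      rw [GG, Finset.mul_sum, Finset.sum_mul]
      exact Finset.sum_congr rfl fun i _ => by ring
    rw [intc hg]
    refine integral_finset_sum _ fun i _ => ?_
    exact ((hu.continuous.mul (pd_contDiff hu i).continuous).mul
      ((pd_contDiff hη i).continuous.mul
        (contDiff_lap hη).continuous)).integrable_of_hasCompactSupport
      (hcs_dom (lap n η) hwc (fun x hx => by simp [hx]))
  rw [hsplit, Finset.sum_congr rfl fun i _ => step i, ← Finset.mul_sum]
  have hint : ∀ i : Fin n, Integrable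
      (fun x => (u x)^2 * pd n i (fun y => pd n i η y * lap n η y) x) := by
    intro i
    refine ((hu.continuous.pow 2).mul
      ((pd_contDiff ((pd_contDiff hη i).mul (contDiff_lap hη))
        i)).continuous).integrable_of_hasCompactSupport ?_
    exact hcs_dom (pd n i (fun y => pd n i η y * lap n η y))
      (hcs_pd ((pd_contDiff hη i).mul (contDiff_lap hη))
        (hcs_dom (lap n η) hwc (fun x hx => by simp [hx])) i)
      (fun x hx => by simp [hx])
  rw [← integral_finset_sum _ fun i _ => hint i]
  have key : ∀ x : E, ∑ i, (u x)^2 * pd n i (fun y => pd n i η y * lap n η y) x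
      = (u x)^2 * (lap n η x)^2 + (u x)^2 * KK n η x := by
    intro x
    have e : ∀ i : Fin n, pd n i (fun y => pd n i η y * lap n η y) x
        = pd n i η x * pd n i (lap n η) x + lap n η x * pd n i (pd n i η) x :=
      fun i => pd_mul (pd_contDiff hη i) (contDiff_lap hη) i x
    rw [Finset.sum_congr rfl fun i _ => by rw [e i]]
    have h4 : ∑ i : Fin n, (u x)^2 * (pd n i η x * pd n i (lap n η) x
        + lap n η x * pd n i (pd n i η) x)
        = (u x)^2 * KK n η x + (u x)^2 * lap n η x * ∑ i, pd n i (pd n i η) x := by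
      rw [KK, Finset.mul_sum, Finset.mul_sum, ← Finset.sum_add_distrib]
      exact Finset.sum_congr rfl fun i _ => by ring
    rw [h4, ← lap_eq_sum hη]
    ring
  rw [intc key, integral_add]
  · ring
  · exact ((hu.continuous.pow 2).mul
      ((contDiff_lap hη).continuous.pow 2)).integrable_of_hasCompactSupport
      (hcs_dom (lap n η) hwc (fun x hx => by simp [hx]))
  · exact ((hu.continuous.pow 2).mul (cd_KK hη).continuous).integrable_of_hasCompactSupport
      (hcs_dom (KK n η) (hcs_KK hη hηc) (fun x hx => by simp [hx]))

lemma rpow_core {p : ℝ} (hp : 1 < p) (t : ℝ) : |t| ^ (p-1) * (t*t) = |t| ^ (p+1) := by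
  rcases eq_or_ne t 0 with h|h
  · simp [h, Real.zero_rpow (show p+1 ≠ 0 by linarith)]
  · have h1 : 0 < |t| := abs_pos.2 h
    have h2 : t * t = |t| ^ (2:ℝ) := by
      rw [show (2:ℝ) = ((2:ℕ):ℝ) by norm_num, Real.rpow_natCast]
      rw [sq_abs]; ring
    rw [h2, ← Real.rpow_add h1]
    ring_nf

lemma rpow_core2 {p : ℝ} (hp : 1 < p) (t s : ℝ) :
    |t| ^ (p-1) * (t*s)^2 = |t| ^ (p+1) * s^2 := by
  have h := rpow_core hp t
  calc |t| ^ (p-1) * (t*s)^2 = (|t| ^ (p-1) * (t*t)) * s^2 := by ring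
  _ = |t| ^ (p+1) * s^2 := by rw [h]

lemma rpow_core3 {p : ℝ} (hp : 1 < p) (t s : ℝ) :
    (|t| ^ (p-1) * t) * (t * s) = |t| ^ (p+1) * s := by
  have h := rpow_core hp t
  calc (|t| ^ (p-1) * t) * (t * s) = (|t| ^ (p-1) * (t*t)) * s := by ring
  _ = |t| ^ (p+1) * s := by rw [h]

end SELib


set_option maxHeartbeats 2000000 in
/-- Lemma 4.2: basic stability estimate with test function `η`, where `v = Δu`. -/
theorem stability_estimate (n : ℕ) (p : ℝ) (hp : 1 < p) :
    ∃ C : ℝ, 0 < C ∧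
      ∀ u : EuclideanSpace ℝ (Fin n) → ℝ, ContDiff ℝ (⊤ : ℕ∞) u →
        (∀ x, biLap n u x = |u x| ^ (p - 1) * u x) →
        StableOn n p u Set.univ →
        ∀ η : EuclideanSpace ℝ (Fin n) → ℝ, ContDiff ℝ (⊤ : ℕ∞) η → HasCompactSupport η →
          (∫ x, ((lap n u x)^2 + |u x| ^ (p + 1)) * (η x)^2) ≤
            C * (∫ x, (u x)^2 *
                (|(inner ℝ (gradient (lap n η) x) (gradient η x) : ℝ)| + (lap n η x)^2 +
                  |lap n (fun y => ‖gradient η y‖^2) x|)) +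
            C * ∫ x, |u x * lap n u x| * ‖gradient η x‖^2 := by
  refine ⟨20 + 18/(p-1), ?_, ?_⟩
  · have h1 : (0:ℝ) < 18/(p-1) := div_pos (by norm_num) (by linarith)
    linarith
  intro u hu hpde hstab η hη hηc
  have hp1 : (0:ℝ) < p - 1 := by linarith
  -- continuity facts
  have cu := hu.continuous
  have ca := (contDiff_lap hu).continuous
  have cη := hη.continuous
  have clapη := (contDiff_lap hη).continuous
  have cψ := (cd_psiF hη).continuous
  have cG := (cd_GG hu hη).continuous
  have cb := (cd_bb hu hη).continuous
  have cK := (cd_KK hη).continuous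
  have clapψ := (contDiff_lap (cd_psiF hη)).continuous
  have cpdu : ∀ i : Fin n, Continuous (pd n i u) := fun i => (pd_contDiff hu i).continuous
  have cX : Continuous (fun x => |u x| ^ (p+1)) :=
    cu.abs.rpow_const (fun x => Or.inr (by linarith))
  -- compact supports
  have hψc := hcs_psiF hη hηc
  have hGc : HasCompactSupport (GG n u η) := hcs_GG hη hηc
  have hbc := hcs_bb hu hη hηc
  have hKc := hcs_KK hη hηc
  have hlapηc := hcs_lap hη hηc
  have hlapψc := hcs_lap (cd_psiF hη) hψc
  -- integrability of all relevant integrands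
  have iA : Integrable (fun x => (η x)^2 * (lap n u x)^2) :=
    ((cη.pow 2).mul (ca.pow 2)).integrable_of_hasCompactSupport
      (hcs_dom η hηc (fun x hx => by simp [hx]))
  have iI0 : Integrable (fun x => |u x| ^ (p+1) * (η x)^2) :=
    (cX.mul (cη.pow 2)).integrable_of_hasCompactSupport
      (hcs_dom η hηc (fun x hx => by simp [hx]))
  have iM : Integrable (fun x => η x * lap n u x * bb n u η x) :=
    (((cη.mul ca)).mul cb).integrable_of_hasCompactSupport
      (hcs_dom η hηc (fun x hx => by simp [hx]))
  have iB : Integrable (fun x => (bb n u η x)^2) :=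
    (cb.pow 2).integrable_of_hasCompactSupport
      (hcs_dom (bb n u η) hbc (fun x hx => by simp [hx]))
  have iW : Integrable (fun x => u x * lap n u x * psiF n η x) :=
    ((cu.mul ca).mul cψ).integrable_of_hasCompactSupport
      (hcs_dom (psiF n η) hψc (fun x hx => by simp [hx]))
  have iQ : Integrable (fun x => (GG n u η x)^2) :=
    (cG.pow 2).integrable_of_hasCompactSupport
      (hcs_dom (GG n u η) hGc (fun x hx => by simp [hx]))
  have iV : Integrable (fun x => u x * GG n u η x * lap n η x) :=
    ((cu.mul cG).mul clapη).integrable_of_hasCompactSupport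
      (hcs_dom (lap n η) hlapηc (fun x hx => by simp [hx]))
  have iS3 : Integrable (fun x => (u x)^2 * (lap n η x)^2) :=
    ((cu.pow 2).mul (clapη.pow 2)).integrable_of_hasCompactSupport
      (hcs_dom (lap n η) hlapηc (fun x hx => by simp [hx]))
  have iT : Integrable (fun x => (∑ i, (pd n i u x)^2) * psiF n η x) :=
    ((continuous_finset_sum _ fun i _ => ((cpdu i).pow 2)).mul cψ).integrable_of_hasCompactSupport
      (hcs_dom (psiF n η) hψc (fun x hx => by simp [hx]))
  have iL2 : Integrable (fun x => (u x)^2 * lap n (psiF n η) x) :=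
    ((cu.pow 2).mul clapψ).integrable_of_hasCompactSupport
      (hcs_dom (lap n (psiF n η)) hlapψc (fun x hx => by simp [hx]))
  have iS2 : Integrable (fun x => (u x)^2 * |lap n (psiF n η) x|) :=
    ((cu.pow 2).mul clapψ.abs).integrable_of_hasCompactSupport
      (hcs_dom (lap n (psiF n η)) hlapψc (fun x hx => by simp [hx]))
  have iU4 : Integrable (fun x => (u x)^2 * KK n η x) :=
    ((cu.pow 2).mul cK).integrable_of_hasCompactSupport
      (hcs_dom (KK n η) hKc (fun x hx => by simp [hx]))
  have iS4 : Integrable (fun x => (u x)^2 * |KK n η x|) :=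
    ((cu.pow 2).mul cK.abs).integrable_of_hasCompactSupport
      (hcs_dom (KK n η) hKc (fun x hx => by simp [hx]))
  have iS1 : Integrable (fun x => |u x * lap n u x| * psiF n η x) :=
    ((cu.mul ca).abs.mul cψ).integrable_of_hasCompactSupport
      (hcs_dom (psiF n η) hψc (fun x hx => by simp [hx]))
  -- pointwise nonnegativity of ψ
  have hψ0 : ∀ x, 0 ≤ psiF n η x := fun x => Finset.sum_nonneg fun i _ => sq_nonneg _
  -- Rewrite the goal
  have hLHS : (∫ x, ((lap n u x)^2 + |u x| ^ (p + 1)) * (η x)^2)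
      = (∫ x, (η x)^2 * (lap n u x)^2) + ∫ x, |u x| ^ (p+1) * (η x)^2 := by
    rw [intc (g := fun x => (η x)^2 * (lap n u x)^2 + |u x| ^ (p+1) * (η x)^2)
      (fun x => by ring)]
    exact integral_add iA iI0
  have hψfun : (fun y => ‖gradient η y‖^2) = psiF n η := funext fun y => grad_norm_sq y
  have hRHS1 : (∫ x, (u x)^2 *
        (|(inner ℝ (gradient (lap n η) x) (gradient η x) : ℝ)| + (lap n η x)^2 +
          |lap n (fun y => ‖gradient η y‖^2) x|))
      = (∫ x, (u x)^2 * |KK n η x|) + (∫ x, (u x)^2 * (lap n η x)^2)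
        + ∫ x, (u x)^2 * |lap n (psiF n η) x| := by
    rw [intc (g := fun x => (u x)^2 * |KK n η x| + (u x)^2 * (lap n η x)^2
        + (u x)^2 * |lap n (psiF n η) x|) (fun x => ?_)]
    · have g12 : Integrable (fun x => (u x)^2 * |KK n η x| + (u x)^2 * (lap n η x)^2) :=
        iS4.add iS3
      rw [integral_add g12 iS2, integral_add iS4 iS3]
    · have e1 : (inner ℝ (gradient (lap n η) x) (gradient η x) : ℝ) = KK n η x := by
        rw [grad_inner]; rfl
      rw [e1, hψfun]; ring
  have hRHS2 : (∫ x, |u x * lap n u x| * ‖gradient η x‖^2)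
      = ∫ x, |u x * lap n u x| * psiF n η x :=
    intc fun x => by rw [grad_norm_sq]; rfl
  rw [hLHS, hRHS1, hRHS2]
  -- stability with test function uη
  have hφc : HasCompactSupport (fun y => u y * η y) :=
    hcs_dom η hηc (fun x hx => by simp [hx])
  have hstab' := hstab (fun y => u y * η y) (hu.mul hη) hφc (Set.subset_univ _)
  have hstI : (∫ y, |u y| ^ (p-1) * ((fun y => u y * η y) y)^2)
      = ∫ x, |u x| ^ (p+1) * (η x)^2 :=
    intc fun y => by simpa using rpow_core2 hp (u y) (η y)
  rw [hstI] at hstab'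
  -- expansion of ∫ (Δ(uη))²
  have hSB : (∫ y, (lap n (fun y' => u y' * η y') y)^2)
      = 1 * (∫ x, (η x)^2 * (lap n u x)^2) + 2 * (∫ x, η x * lap n u x * bb n u η x)
        + 1 * (∫ x, (bb n u η x)^2) := by
    rw [intc (g := fun x => 1 * ((η x)^2 * (lap n u x)^2)
        + 2 * (η x * lap n u x * bb n u η x) + 1 * ((bb n u η x)^2))
      (fun x => by rw [exp1 hu hη x]; ring)]
    exact int_split3 iA iM iB 1 2 1
  rw [hSB] at hstab'
  -- testing the equation with uη²
  have hgreen : ∫ x, lap n (lap n u) x * (u x * (η x)^2)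
      = ∫ x, lap n u x * lap n (fun y => u y * (η y)^2) x :=
    green (contDiff_lap hu) (hu.mul (hη.pow 2))
      (hcs_dom η hηc (fun x hx => by simp [hx]))
  have hI0eq : (∫ x, |u x| ^ (p+1) * (η x)^2)
      = 1 * (∫ x, (η x)^2 * (lap n u x)^2) + 2 * (∫ x, η x * lap n u x * bb n u η x)
        + 2 * (∫ x, u x * lap n u x * psiF n η x) := by
    have e1 : ∀ x, |u x| ^ (p+1) * (η x)^2 = lap n (lap n u) x * (u x * (η x)^2) := by
      intro x
      have hb : lap n (lap n u) x = |u x| ^ (p-1) * u x := hpde x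
      rw [hb]
      exact (rpow_core3 hp (u x) ((η x)^2)).symm
    rw [intc e1, hgreen]
    rw [intc (g := fun x => 1 * ((η x)^2 * (lap n u x)^2)
        + 2 * (η x * lap n u x * bb n u η x) + 2 * (u x * lap n u x * psiF n η x))
      (fun x => by rw [exp2 hu hη x]; ring)]
    exact int_split3 iA iM iW 1 2 2
  -- expansion of B
  have hBeq : (∫ x, (bb n u η x)^2)
      = 4 * (∫ x, (GG n u η x)^2) + 4 * (∫ x, u x * GG n u η x * lap n η x)
        + 1 * (∫ x, (u x)^2 * (lap n η x)^2) := by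
    rw [intc (g := fun x => 4 * ((GG n u η x)^2) + 4 * (u x * GG n u η x * lap n η x)
        + 1 * ((u x)^2 * (lap n η x)^2)) (fun x => by rw [bb]; ring)]
    exact int_split3 iQ iV iS3 4 4 1
  have hV := J7 hu hη hηc
  have hT := J6 hu (cd_psiF hη) hψc
  -- Cauchy-Schwarz
  have hQT : (∫ x, (GG n u η x)^2) ≤ ∫ x, (∑ i, (pd n i u x)^2) * psiF n η x := by
    refine integral_mono iQ iT fun x => ?_
    show (GG n u η x)^2 ≤ (∑ i, (pd n i u x)^2) * psiF n η x
    exact Finset.sum_mul_sq_le_sq_mul_sq _ _ _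
  -- absolute value bounds
  have hW : -(∫ x, u x * lap n u x * psiF n η x) ≤ ∫ x, |u x * lap n u x| * psiF n η x := by
    rw [← integral_neg]
    refine integral_mono iW.neg iS1 fun x => ?_
    show -(u x * lap n u x * psiF n η x) ≤ |u x * lap n u x| * psiF n η x
    nlinarith [mul_le_mul_of_nonneg_right (neg_le_abs (u x * lap n u x)) (hψ0 x)]
  have hL2 : (∫ x, (u x)^2 * lap n (psiF n η) x) ≤ ∫ x, (u x)^2 * |lap n (psiF n η) x| :=
    integral_mono iL2 iS2 fun x => mul_le_mul_of_nonneg_left (le_abs_self _) (sq_nonneg _)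
  have hU4 : -(∫ x, (u x)^2 * KK n η x) ≤ ∫ x, (u x)^2 * |KK n η x| := by
    rw [← integral_neg]
    refine integral_mono iU4.neg iS4 fun x => ?_
    show -((u x)^2 * KK n η x) ≤ (u x)^2 * |KK n η x|
    nlinarith [mul_le_mul_of_nonneg_left (neg_le_abs (KK n η x)) (sq_nonneg (u x))]
  have hM : -(2 * ∫ x, η x * lap n u x * bb n u η x)
      ≤ (1/2) * (∫ x, (η x)^2 * (lap n u x)^2) + 2 * (∫ x, (bb n u η x)^2) := by
    have gA : Integrable (fun x => (1/2) * ((η x)^2 * (lap n u x)^2)) := iA.const_mul _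
    have gB : Integrable (fun x => 2 * ((bb n u η x)^2)) := iB.const_mul _
    have gAB : Integrable
        (fun x => (1/2) * ((η x)^2 * (lap n u x)^2) + 2 * ((bb n u η x)^2)) := gA.add gB
    have h := integral_mono (iM.const_mul (-2)) gAB (fun x => ?_)
    · rw [integral_add gA gB, integral_const_mul,
        integral_const_mul, integral_const_mul] at h
      linarith [h]
    · show (-2) * (η x * lap n u x * bb n u η x)
        ≤ (1/2) * ((η x)^2 * (lap n u x)^2) + 2 * ((bb n u η x)^2)
      nlinarith [sq_nonneg (η x * lap n u x + 2 * bb n u η x)]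
  -- nonnegativity
  have hS1n : 0 ≤ ∫ x, |u x * lap n u x| * psiF n η x :=
    integral_nonneg fun x => mul_nonneg (abs_nonneg _) (hψ0 x)
  have hS2n : 0 ≤ ∫ x, (u x)^2 * |lap n (psiF n η) x| :=
    integral_nonneg fun x => mul_nonneg (sq_nonneg _) (abs_nonneg _)
  have hS3n : 0 ≤ ∫ x, (u x)^2 * (lap n η x)^2 :=
    integral_nonneg fun x => mul_nonneg (sq_nonneg _) (sq_nonneg _)
  have hS4n : 0 ≤ ∫ x, (u x)^2 * |KK n η x| :=
    integral_nonneg fun x => mul_nonneg (sq_nonneg _) (abs_nonneg _)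
  -- main chain
  have hBle : (∫ x, (bb n u η x)^2)
      ≤ 4 * (∫ x, |u x * lap n u x| * psiF n η x)
        + 2 * (∫ x, (u x)^2 * |lap n (psiF n η) x|)
        + 2 * (∫ x, (u x)^2 * |KK n η x|) := by
    linarith [hBeq, hV, hQT, hT, hW, hL2, hU4, hS3n]
  have hstar : (p-1) * (∫ x, |u x| ^ (p+1) * (η x)^2)
      ≤ (∫ x, (bb n u η x)^2) - 2 * (∫ x, u x * lap n u x * psiF n η x) := by
    nlinarith [hstab', hI0eq]
  have hI0le : (p-1) * (∫ x, |u x| ^ (p+1) * (η x)^2)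
      ≤ 6 * (∫ x, |u x * lap n u x| * psiF n η x)
        + 2 * (∫ x, (u x)^2 * |lap n (psiF n η) x|)
        + 2 * (∫ x, (u x)^2 * |KK n η x|) := by
    linarith [hstar, hBle, hW]
  have hAle : (∫ x, (η x)^2 * (lap n u x)^2)
      ≤ 2 * (∫ x, |u x| ^ (p+1) * (η x)^2) + 4 * (∫ x, (bb n u η x)^2)
        + 4 * (∫ x, |u x * lap n u x| * psiF n η x) := by
    linarith [hI0eq, hM, hW]
  have hI0'' : 3 * (∫ x, |u x| ^ (p+1) * (η x)^2)
      ≤ (18 * (∫ x, |u x * lap n u x| * psiF n η x)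
          + 6 * (∫ x, (u x)^2 * |lap n (psiF n η) x|)
          + 6 * (∫ x, (u x)^2 * |KK n η x|)) / (p-1) := by
    rw [le_div_iff₀ hp1]
    nlinarith [hI0le]
  have hAll : (∫ x, (η x)^2 * (lap n u x)^2) + (∫ x, |u x| ^ (p+1) * (η x)^2)
      ≤ 20 * (∫ x, |u x * lap n u x| * psiF n η x)
        + 8 * (∫ x, (u x)^2 * |lap n (psiF n η) x|)
        + 8 * (∫ x, (u x)^2 * |KK n η x|)
        + (18 * (∫ x, |u x * lap n u x| * psiF n η x)
          + 6 * (∫ x, (u x)^2 * |lap n (psiF n η) x|)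
          + 6 * (∫ x, (u x)^2 * |KK n η x|)) / (p-1) := by
    linarith [hAle, hBle, hI0'']
  have h1 : 0 ≤ (12 * (∫ x, (u x)^2 * |lap n (psiF n η) x|)
      + 18 * (∫ x, (u x)^2 * (lap n η x)^2)
      + 12 * (∫ x, (u x)^2 * |KK n η x|)) / (p-1) :=
    div_nonneg (by linarith [hS2n, hS3n, hS4n]) hp1.le
  have hring : (20 + 18/(p-1)) * (((∫ x, (u x)^2 * |KK n η x|)
        + (∫ x, (u x)^2 * (lap n η x)^2)) + (∫ x, (u x)^2 * |lap n (psiF n η) x|))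
      + (20 + 18/(p-1)) * (∫ x, |u x * lap n u x| * psiF n η x)
      = 20 * (∫ x, |u x * lap n u x| * psiF n η x)
        + 8 * (∫ x, (u x)^2 * |lap n (psiF n η) x|)
        + 8 * (∫ x, (u x)^2 * |KK n η x|)
        + (18 * (∫ x, |u x * lap n u x| * psiF n η x)
          + 6 * (∫ x, (u x)^2 * |lap n (psiF n η) x|)
          + 6 * (∫ x, (u x)^2 * |KK n η x|)) / (p-1)
        + (12 * (∫ x, (u x)^2 * |lap n (psiF n η) x|)
          + 20 * (∫ x, (u x)^2 * (lap n η x)^2)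
          + 12 * (∫ x, (u x)^2 * |KK n η x|)
          + (12 * (∫ x, (u x)^2 * |lap n (psiF n η) x|)
            + 18 * (∫ x, (u x)^2 * (lap n η x)^2)
            + 12 * (∫ x, (u x)^2 * |KK n η x|)) / (p-1)) := by
    field_simp
    ring
  linarith [hAll, h1, hS2n, hS3n, hS4n, hring]
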